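/- Let n ≥ 3 and let P be n points equally spaced on the unit circle. If G is a geometric t-spanner on P with t < 2, then G contains every edge of the convex hull of P (i.e., every edge {p_i, p_{i+1}} between consecutive points). -/

import Mathlib

open Real SimpleGraph

/-- The `i`-th of the `n` points equally spaced on the unit circle in the Euclidean
plane, `p_i = (sin(2πi/n), cos(2πi/n))`. -/
noncomputable def circlePt (n : ℕ) (i : ℕ) : EuclideanSpace ℝ (Fin 2) :=
  (WithLp.equiv 2 (Fin 2 → ℝ)).symm
    ![sin (2 * π * i / n), cos (2 * π * i / n)]

/-- The Euclidean length of a walk in a geometric graph on the circle points. -/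
noncomputable def walkLength {n : ℕ} {G : SimpleGraph (Fin n)} {u v : Fin n}
    (w : G.Walk u v) : ℝ :=
  (w.darts.map fun d => dist (circlePt n d.fst) (circlePt n d.snd)).sum

/-!
Every chord between two of the `n` equally spaced points subtends an angle that is a
nonzero multiple of `2π/n`, so it is at least as long as a hull edge, `2 sin (π/n)`.
A walk between consecutive points that avoids the hull edge joining them has at least
two edges, hence length at least twice the distance of its endpoints.
-/

lemma sin_le_sin_of_mem_Icc {a y : ℝ} (ha : 0 ≤ a) (hay : a ≤ y) (hy : y ≤ π - a) :
    sin a ≤ sin y := by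
  rcases le_total y (π / 2) with hy2 | hy2
  · exact sin_le_sin_of_le_of_le_pi_div_two (by linarith [pi_pos]) hy2 hay
  · rw [← sin_pi_sub y]
    exact sin_le_sin_of_le_of_le_pi_div_two (by linarith [pi_pos]) (by linarith) (by linarith)

lemma dist_circlePt (n a b : ℕ) :
    dist (circlePt n a) (circlePt n b) = 2 * |sin (π * ((a : ℝ) - b) / n)| := by
  set A := 2 * π * (a : ℝ) / n
  set B := 2 * π * (b : ℝ) / n
  have hchord : (sin A - sin B) ^ 2 + (cos A - cos B) ^ 2 = (2 * sin ((A - B) / 2)) ^ 2 := by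
    have hhalf := sin_sq_eq_half_sub ((A - B) / 2)
    rw [show 2 * ((A - B) / 2) = A - B by ring, cos_sub] at hhalf
    nlinarith [sin_sq_add_cos_sq A, sin_sq_add_cos_sq B]
  have hAB : (A - B) / 2 = π * ((a : ℝ) - b) / n := by ring
  rw [EuclideanSpace.dist_eq]
  simp only [circlePt, Fin.sum_univ_two, Real.dist_eq, sq_abs, WithLp.equiv_symm_apply,
    PiLp.toLp_apply, Matrix.cons_val_zero, Matrix.cons_val_one]
  rw [hchord, sqrt_sq_eq_abs, abs_mul, hAB, abs_two]

lemma circlePt_mod (n k : ℕ) : circlePt n (k % n) = circlePt n k := by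
  rcases Nat.eq_zero_or_pos n with rfl | hn
  · rw [Nat.mod_zero]
  have hangle : 2 * π * (k : ℝ) / n = 2 * π * ((k % n : ℕ) : ℝ) / n + (k / n : ℕ) * (2 * π) := by
    have hk : (k : ℝ) = (k % n : ℕ) + (k / n : ℕ) * n := by
      exact_mod_cast (Nat.mod_add_div' k n).symm
    field_simp
    linear_combination hk
  simp only [circlePt, hangle, sin_add_nat_mul_two_pi, cos_add_nat_mul_two_pi]

lemma sin_pi_div_nonneg (n : ℕ) : 0 ≤ sin (π / n) := by
  rcases Nat.eq_zero_or_pos n with rfl | hn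
  · simp
  refine sin_nonneg_of_nonneg_of_le_pi (by positivity) (div_le_self pi_pos.le ?_)
  exact_mod_cast hn

lemma dist_circlePt_succ (n i : ℕ) :
    dist (circlePt n i) (circlePt n (i + 1)) = 2 * sin (π / n) := by
  rw [dist_circlePt, Nat.cast_succ, show π * ((i : ℝ) - (i + 1)) / n = -(π / n) by ring,
    sin_neg, abs_neg, abs_of_nonneg (sin_pi_div_nonneg n)]

lemma two_mul_sin_pi_div_le_dist {n : ℕ} {a b : Fin n} (hab : a ≠ b) :
    2 * sin (π / n) ≤ dist (circlePt n a) (circlePt n b) := by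
  have hn : (0 : ℝ) < n := by exact_mod_cast a.pos
  have hgap : 1 ≤ |(a : ℝ) - b| := by
    have : (a : ℤ) ≠ b := by exact_mod_cast Fin.val_ne_of_ne hab
    exact_mod_cast Int.one_le_abs (sub_ne_zero.mpr this)
  have hspread : |(a : ℝ) - b| ≤ n - 1 := by
    have ha : (a : ℝ) + 1 ≤ n := by exact_mod_cast a.isLt
    have hb : (b : ℝ) + 1 ≤ n := by exact_mod_cast b.isLt
    rw [abs_sub_le_iff]
    constructor <;> linarith [Nat.cast_nonneg (α := ℝ) a, Nat.cast_nonneg (α := ℝ) b]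
  have habs : |π * ((a : ℝ) - b) / n| = π * |(a : ℝ) - b| / n := by
    rw [abs_div, abs_mul, abs_of_pos pi_pos, abs_of_pos hn]
  have hle_pi : π * |(a : ℝ) - b| / n ≤ π - π / n := by
    rw [div_le_iff₀ hn, sub_mul, div_mul_cancel₀ _ hn.ne']
    nlinarith [pi_pos]
  rw [dist_circlePt, abs_sin_eq_sin_abs_of_abs_le_pi
    (by rw [habs]; linarith [div_pos pi_pos hn]), habs]
  gcongr
  refine sin_le_sin_of_mem_Icc (by positivity) ?_ hle_pi
  rw [div_le_div_iff_of_pos_right hn]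
  nlinarith [pi_pos]

lemma length_mul_le_walkLength {n : ℕ} {G : SimpleGraph (Fin n)} {u v : Fin n}
    (w : G.Walk u v) : w.length * (2 * sin (π / n)) ≤ walkLength w := by
  rw [walkLength, ← w.length_darts, ← List.length_map (f := fun d : G.Dart =>
    dist (circlePt n d.fst) (circlePt n d.snd)), ← nsmul_eq_mul]
  refine List.card_nsmul_le_sum _ _ fun x hx => ?_
  obtain ⟨d, -, rfl⟩ := List.mem_map.1 hx
  exact two_mul_sin_pi_div_le_dist d.adj.ne

lemma two_le_length_of_not_adj {V : Type*} {G : SimpleGraph V} {u v : V} (w : G.Walk u v)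
    (huv : u ≠ v) (hadj : ¬G.Adj u v) : 2 ≤ w.length := by
  by_contra! h
  interval_cases hw : w.length
  · exact huv (SimpleGraph.Walk.eq_of_length_eq_zero hw)
  · exact hadj (SimpleGraph.Walk.adj_of_length_eq_one hw)

/-- Let `n ≥ 3` and `P` be the `n` points equally spaced on the unit
circle. If `G` is a geometric `t`-spanner on `P` with `t < 2`, then `G` contains every
edge of the convex hull of `P`, i.e. every edge `{p_i, p_{i+1}}` between consecutive
points. -/
theorem spanner_contains_hull_edges (n : ℕ) (hn : 3 ≤ n)
    (G : SimpleGraph (Fin n)) (t : ℝ) (ht : t < 2)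
    (hspan : ∀ u v : Fin n, ∃ w : G.Walk u v,
      walkLength w ≤ t * dist (circlePt n u) (circlePt n v)) :
    ∀ i j : Fin n, (j : ℕ) = ((i : ℕ) + 1) % n → G.Adj i j := by
  intro i j hij
  by_contra hadj
  obtain ⟨w, hw⟩ := hspan i j
  have hedge : dist (circlePt n i) (circlePt n j) = 2 * sin (π / n) := by
    rw [hij, circlePt_mod, dist_circlePt_succ]
  have hpos : 0 < sin (π / n) := by
    refine sin_pos_of_pos_of_lt_pi (by positivity) ((div_lt_self pi_pos) ?_)
    exact_mod_cast (by omega : 1 < n)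
  have hij_ne : i ≠ j := fun h => by
    rw [h, _root_.dist_self] at hedge
    linarith
  have hlen : (2 : ℝ) ≤ w.length := by exact_mod_cast two_le_length_of_not_adj w hij_ne hadj
  have hshort := calc
    walkLength w ≤ t * (2 * sin (π / n)) := hedge ▸ hw
    _ < 2 * (2 * sin (π / n)) := by gcongr
    _ ≤ w.length * (2 * sin (π / n)) := by gcongr
    _ ≤ walkLength w := length_mul_le_walkLength w
  exact lt_irrefl _ hshort
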